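/- arXiv:2405.02635 — 2 statements merged into one kernel-verified Lean document; each statement's English description precedes it below -/
import Mathlib

section
/- Let (X,d) be a metric space, A, B nonempty subsets of X, and T : A → B a proximal contraction with constant k ∈ [0,1) such that A₀ ≠ ∅, T(A₀) ⊆ B₀, A is proximally complete (every T-proximal Cauchy sequence in A converges in A), and T is proximally continuous (for every T-proximal sequence (xₙ) converging to x ∈ A, T xₙ → T x). Then T has a unique best proximity point x̄ ∈ A, i.e., d(x̄, T x̄) = dist(A,B), and every T-proximal sequence starting at a point of A₀ converges to x̄. -/
/-! Because `T` maps `A₀` into `B₀`, from every point of `A₀` one can step proximally to another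
point of `A₀`, so a `T`-proximal sequence `(xₙ)` exists. The proximal contraction shrinks its
consecutive distances by the factor `k`, so it is Cauchy; proximal completeness gives a limit
`p ∈ A`, and proximal continuity passes `d(xₙ₊₁, T xₙ) = dist(A,B)` to the limit, so `p` is a best
proximity point. Applying the proximal contraction to a proximal step `yₙ ↦ yₙ₊₁` and the pair
`(p, p)` gives `d(yₙ₊₁, p) ≤ k · d(yₙ, p)`, hence `yₙ → p`; the same with a second best proximity
point `q` in place of both `yₙ` and `yₙ₊₁` gives `d(q, p) ≤ k · d(q, p)`, so `q = p`. -/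

open Metric Filter Topology

noncomputable def setDist {X : Type*} [MetricSpace X] (A B : Set X) : ℝ :=
  sInf (Set.image2 dist A B)

theorem exists_seq_of_forall_exists_mem {α : Type*} {S : Set α} {R : α → α → Prop}
    (hS : S.Nonempty) (hR : ∀ a ∈ S, ∃ b ∈ S, R a b) :
    ∃ x : ℕ → α, (∀ n, x n ∈ S) ∧ ∀ n, R (x n) (x (n + 1)) := by
  choose f hfS hfR using hR
  obtain ⟨a, ha⟩ := hS
  let g : S → S := fun s => ⟨f s s.2, hfS s s.2⟩
  exact ⟨fun n => (g^[n] ⟨a, ha⟩).1, fun n => (g^[n] _).2,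
    fun n => by simpa only [Function.iterate_succ_apply'] using hfR _ (g^[n] _).2⟩

section

variable {X : Type*} [MetricSpace X]

theorem dist_eq_of_tendsto_of_dist_succ_eq {x z : ℕ → X} {p q : X} {c : ℝ}
    (hx : Tendsto x atTop (𝓝 p)) (hz : Tendsto z atTop (𝓝 q))
    (hxz : ∀ n, dist (x (n + 1)) (z n) = c) : dist p q = c := by
  have hlim := ((tendsto_add_atTop_iff_nat 1).2 hx).dist hz
  simp only [hxz] at hlim
  exact tendsto_nhds_unique hlim tendsto_const_nhds

def ProximalContraction (A : Set X) (T : X → X) (c k : ℝ) : Prop :=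
  ∀ x ∈ A, ∀ y ∈ A, ∀ u ∈ A, ∀ v ∈ A, dist u (T x) = c → dist v (T y) = c →
    dist u v ≤ k * dist x y

namespace ProximalContraction

variable {A : Set X} {T : X → X} {c k : ℝ}

theorem cauchySeq (hT : ProximalContraction A T c k) (hk0 : 0 ≤ k) (hk1 : k < 1)
    {x : ℕ → X} (hxA : ∀ n, x n ∈ A) (hx : ∀ n, dist (x (n + 1)) (T (x n)) = c) :
    CauchySeq x := by
  have hstep : ∀ n, dist (x (n + 1)) (x (n + 1 + 1)) ≤ k * dist (x n) (x (n + 1)) := fun n =>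
    hT _ (hxA n) _ (hxA (n + 1)) _ (hxA (n + 1)) _ (hxA (n + 2)) (hx n) (hx (n + 1))
  refine cauchySeq_of_le_geometric k (dist (x 0) (x 1)) hk1 fun n => ?_
  rw [mul_comm]
  exact le_geom (u := fun n => dist (x n) (x (n + 1))) hk0 n fun m _ => hstep m

theorem eq_of_dist_eq (hT : ProximalContraction A T c k) (hk1 : k < 1)
    {p q : X} (hpA : p ∈ A) (hqA : q ∈ A) (hp : dist p (T p) = c) (hq : dist q (T q) = c) :
    q = p := by
  have hle : dist q p ≤ k * dist q p := hT q hqA p hpA q hqA p hpA hq hp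
  have hnonneg : 0 ≤ dist q p := dist_nonneg
  exact dist_le_zero.1 (by nlinarith)

theorem tendsto_of_dist_eq (hT : ProximalContraction A T c k) (hk0 : 0 ≤ k) (hk1 : k < 1)
    {p : X} (hpA : p ∈ A) (hp : dist p (T p) = c)
    {y : ℕ → X} (hyA : ∀ n, y n ∈ A) (hy : ∀ n, dist (y (n + 1)) (T (y n)) = c) :
    Tendsto y atTop (𝓝 p) := by
  have hstep : ∀ n, dist (y (n + 1)) p ≤ k * dist (y n) p := fun n =>
    hT _ (hyA n) p hpA _ (hyA (n + 1)) p hpA (hy n) hp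
  have hgeom : Tendsto (fun n => k ^ n * dist (y 0) p) atTop (𝓝 0) := by
    simpa using (tendsto_pow_atTop_nhds_zero_of_lt_one hk0 hk1).mul_const (dist (y 0) p)
  exact tendsto_iff_dist_tendsto_zero.2 <| squeeze_zero (fun _ => dist_nonneg)
    (fun n => le_geom (u := fun n => dist (y n) p) hk0 n fun m _ => hstep m) hgeom

end ProximalContraction

end

theorem statement10_general {X : Type*} [MetricSpace X] (A B : Set X)
    (T : X → X)
    (k : ℝ) (hk0 : 0 ≤ k) (hk1 : k < 1)
    (hcontr : ∀ x ∈ A, ∀ y ∈ A, ∀ u ∈ A, ∀ v ∈ A,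
      dist u (T x) = setDist A B → dist v (T y) = setDist A B →
      dist u v ≤ k * dist x y)
    (hA0 : {a ∈ A | ∃ b ∈ B, dist a b = setDist A B}.Nonempty)
    (hTA0 : Set.MapsTo T {a ∈ A | ∃ b ∈ B, dist a b = setDist A B}
      {b ∈ B | ∃ a ∈ A, dist a b = setDist A B})
    (hcomplete : ∀ x : ℕ → X, (∀ n, x n ∈ A) →
      (∀ n, dist (x (n + 1)) (T (x n)) = setDist A B) → CauchySeq x →
      ∃ l ∈ A, Tendsto x atTop (𝓝 l))
    (hcont : ∀ (x : ℕ → X), (∀ n, x n ∈ A) →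
      (∀ n, dist (x (n + 1)) (T (x n)) = setDist A B) →
      ∀ l ∈ A, Tendsto x atTop (𝓝 l) → Tendsto (fun n => T (x n)) atTop (𝓝 (T l))) :
    ∃ p ∈ A, dist p (T p) = setDist A B ∧
      (∀ q ∈ A, dist q (T q) = setDist A B → q = p) ∧
      (∀ x : ℕ → X, (∀ n, x n ∈ A) →
        x 0 ∈ {a ∈ A | ∃ b ∈ B, dist a b = setDist A B} →
        (∀ n, dist (x (n + 1)) (T (x n)) = setDist A B) →
        Tendsto x atTop (𝓝 p)) := by
  have hT : ProximalContraction A T (setDist A B) k := hcontr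
  have hstep : ∀ a ∈ {a ∈ A | ∃ b ∈ B, dist a b = setDist A B},
      ∃ a' ∈ {a ∈ A | ∃ b ∈ B, dist a b = setDist A B}, dist a' (T a) = setDist A B := by
    intro a ha
    obtain ⟨hTaB, a', ha'A, ha'⟩ := hTA0 ha
    exact ⟨a', ⟨ha'A, T a, hTaB, ha'⟩, ha'⟩
  obtain ⟨x, hxA0, hx⟩ := exists_seq_of_forall_exists_mem hA0 hstep
  have hxA : ∀ n, x n ∈ A := fun n => (hxA0 n).1
  obtain ⟨p, hpA, hxp⟩ := hcomplete x hxA hx (hT.cauchySeq hk0 hk1 hxA hx)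
  have hp : dist p (T p) = setDist A B :=
    dist_eq_of_tendsto_of_dist_succ_eq hxp (hcont x hxA hx p hpA hxp) hx
  exact ⟨p, hpA, hp, fun q hqA hq => hT.eq_of_dist_eq hk1 hpA hqA hp hq,
    fun y hyA _ hy => hT.tendsto_of_dist_eq hk0 hk1 hpA hp hyA hy⟩

theorem statement10 {X : Type*} [MetricSpace X] (A B : Set X)
    (hA : A.Nonempty) (hB : B.Nonempty) (T : X → X) (hT : Set.MapsTo T A B)
    (k : ℝ) (hk0 : 0 ≤ k) (hk1 : k < 1)
    (hcontr : ∀ x ∈ A, ∀ y ∈ A, ∀ u ∈ A, ∀ v ∈ A,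
      dist u (T x) = setDist A B → dist v (T y) = setDist A B →
      dist u v ≤ k * dist x y)
    (hA0 : {a ∈ A | ∃ b ∈ B, dist a b = setDist A B}.Nonempty)
    (hTA0 : Set.MapsTo T {a ∈ A | ∃ b ∈ B, dist a b = setDist A B}
      {b ∈ B | ∃ a ∈ A, dist a b = setDist A B})
    (hcomplete : ∀ x : ℕ → X, (∀ n, x n ∈ A) →
      (∀ n, dist (x (n + 1)) (T (x n)) = setDist A B) → CauchySeq x →
      ∃ l ∈ A, Tendsto x atTop (𝓝 l))
    (hcont : ∀ (x : ℕ → X), (∀ n, x n ∈ A) →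
      (∀ n, dist (x (n + 1)) (T (x n)) = setDist A B) →
      ∀ l ∈ A, Tendsto x atTop (𝓝 l) → Tendsto (fun n => T (x n)) atTop (𝓝 (T l))) :
    ∃ p ∈ A, dist p (T p) = setDist A B ∧
      (∀ q ∈ A, dist q (T q) = setDist A B → q = p) ∧
      (∀ x : ℕ → X, (∀ n, x n ∈ A) →
        x 0 ∈ {a ∈ A | ∃ b ∈ B, dist a b = setDist A B} →
        (∀ n, dist (x (n + 1)) (T (x n)) = setDist A B) →
        Tendsto x atTop (𝓝 p)) :=
  statement10_general A B T k hk0 hk1 hcontr hA0 hTA0 hcomplete hcont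
end

section
/- Let (X,d) be a metric space, A, B nonempty subsets of X, and T : A → B a proximal contraction with constant k ∈ [0,1) such that A₀ ≠ ∅, T(A₀) ⊆ B₀, A is proximally complete, and A₀ is proximally closed in A (the limit of any convergent T-proximal sequence in A₀ lies in A₀). Then T has a unique best proximity point x̄ ∈ A, and for any x₀ ∈ A₀ every T-proximal sequence starting at x₀ converges to x̄. -/
/-!
Along a `T`-proximal sequence in `A` the proximal contraction gives
`d(xₙ₊₁, xₙ₊₂) ≤ k d(xₙ, xₙ₊₁)`, so such sequences are Cauchy. Since `T(A₀) ⊆ B₀`, every point of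
`A₀` starts a proximal sequence that stays in `A₀`; its limit `x̄` lies in `A₀`, so some `z ∈ A`
satisfies `d(z, T x̄) = dist(A, B)`, and contraction forces `xₙ₊₁ → z`, whence `z = x̄` is a best
proximity point. Comparing any proximal sequence (or any other best proximity point) with the
constant sequence `x̄` gives `d(xₙ₊₁, x̄) ≤ k d(xₙ, x̄)`, hence convergence and uniqueness.
-/

open Metric Filter Topology

lemma le_mul_pow_of_succ_le_mul {u : ℕ → ℝ} {k : ℝ} (hk : 0 ≤ k) (h : ∀ n, u (n + 1) ≤ k * u n)
    (n : ℕ) : u n ≤ u 0 * k ^ n := by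
  induction n with
  | zero => simp
  | succ n ih =>
    calc u (n + 1) ≤ k * u n := h n
      _ ≤ k * (u 0 * k ^ n) := mul_le_mul_of_nonneg_left ih hk
      _ = u 0 * k ^ (n + 1) := by ring

section Proximal

variable {X : Type*} [MetricSpace X]

def IsProximalSeq (T : X → X) (δ : ℝ) (x : ℕ → X) : Prop :=
  ∀ n, dist (x (n + 1)) (T (x n)) = δ

def IsProximalContraction (A : Set X) (T : X → X) (δ k : ℝ) : Prop :=
  ∀ x ∈ A, ∀ y ∈ A, ∀ u ∈ A, ∀ v ∈ A, dist u (T x) = δ → dist v (T y) = δ → dist u v ≤ k * dist x y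

lemma exists_isProximalSeq_of_mapsTo {A B : Set X} {T : X → X} {δ : ℝ}
    (hT : Set.MapsTo T {a ∈ A | ∃ b ∈ B, dist a b = δ} {b ∈ B | ∃ a ∈ A, dist a b = δ})
    {x₀ : X} (hx₀ : x₀ ∈ {a ∈ A | ∃ b ∈ B, dist a b = δ}) :
    ∃ x : ℕ → X, (∀ n, x n ∈ {a ∈ A | ∃ b ∈ B, dist a b = δ}) ∧ IsProximalSeq T δ x := by
  set A₀ := {a ∈ A | ∃ b ∈ B, dist a b = δ}
  have hstep : ∀ y ∈ A₀, ∃ z ∈ A₀, dist z (T y) = δ := fun y hy ↦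
    let ⟨hTy, z, hz, hzy⟩ := hT hy
    ⟨z, ⟨hz, T y, hTy, hzy⟩, hzy⟩
  choose! f hfA₀ hf using hstep
  have hmem : ∀ n, f^[n] x₀ ∈ A₀ := fun n ↦
    Set.MapsTo.iterate (fun _ ↦ hfA₀ _) n hx₀
  refine ⟨fun n ↦ f^[n] x₀, hmem, fun n ↦ ?_⟩
  simpa only [Function.iterate_succ_apply'] using hf _ (hmem n)

namespace IsProximalContraction

variable {A : Set X} {T : X → X} {δ k : ℝ} {x : ℕ → X}

lemma dist_succ_le (hT : IsProximalContraction A T δ k) (hxA : ∀ n, x n ∈ A)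
    (hx : IsProximalSeq T δ x) {p z : X} (hp : p ∈ A) (hz : z ∈ A) (hzp : dist z (T p) = δ)
    (n : ℕ) : dist (x (n + 1)) z ≤ k * dist (x n) p :=
  hT _ (hxA n) _ hp _ (hxA (n + 1)) _ hz (hx n) hzp

lemma cauchySeq (hT : IsProximalContraction A T δ k) (hk0 : 0 ≤ k) (hk1 : k < 1)
    (hxA : ∀ n, x n ∈ A) (hx : IsProximalSeq T δ x) : CauchySeq x := by
  refine cauchySeq_of_le_geometric k _ hk1 (le_mul_pow_of_succ_le_mul hk0 fun n ↦ ?_)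
  exact hT.dist_succ_le hxA hx (hxA (n + 1)) (hxA (n + 2)) (hx (n + 1)) n

lemma eq_of_tendsto (hT : IsProximalContraction A T δ k) (hxA : ∀ n, x n ∈ A)
    (hx : IsProximalSeq T δ x) {p z : X} (hp : p ∈ A) (hz : z ∈ A) (hzp : dist z (T p) = δ)
    (hlim : Tendsto x atTop (𝓝 p)) : z = p := by
  have hsucc : Tendsto (fun n ↦ x (n + 1)) atTop (𝓝 z) := by
    rw [tendsto_iff_dist_tendsto_zero]
    refine squeeze_zero (fun _ ↦ dist_nonneg) (hT.dist_succ_le hxA hx hp hz hzp) ?_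
    simpa using (tendsto_iff_dist_tendsto_zero.mp hlim).const_mul k
  exact tendsto_nhds_unique hsucc ((tendsto_add_atTop_iff_nat 1).mpr hlim)

lemma tendsto_of_dist_eq (hT : IsProximalContraction A T δ k) (hk0 : 0 ≤ k) (hk1 : k < 1)
    (hxA : ∀ n, x n ∈ A) (hx : IsProximalSeq T δ x) {p : X} (hp : p ∈ A)
    (hpp : dist p (T p) = δ) : Tendsto x atTop (𝓝 p) := by
  rw [tendsto_iff_dist_tendsto_zero]
  refine squeeze_zero (fun _ ↦ dist_nonneg)
    (le_mul_pow_of_succ_le_mul hk0 (hT.dist_succ_le hxA hx hp hp hpp)) ?_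
  simpa using (tendsto_pow_atTop_nhds_zero_of_lt_one hk0 hk1).const_mul (dist (x 0) p)

lemma eq_of_dist_eq (hT : IsProximalContraction A T δ k) (hk1 : k < 1) {p q : X} (hp : p ∈ A)
    (hq : q ∈ A) (hpp : dist p (T p) = δ) (hqq : dist q (T q) = δ) : q = p := by
  have h := hT q hq p hp q hq p hp hqq hpp
  exact dist_le_zero.mp (by nlinarith [dist_nonneg (x := q) (y := p)])

end IsProximalContraction

end Proximal

theorem statement11_general {X : Type*} [MetricSpace X] (A B : Set X)
    (T : X → X)
    (k : ℝ) (hk0 : 0 ≤ k) (hk1 : k < 1)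
    (hcontr : ∀ x ∈ A, ∀ y ∈ A, ∀ u ∈ A, ∀ v ∈ A,
      dist u (T x) = setDist A B → dist v (T y) = setDist A B →
      dist u v ≤ k * dist x y)
    (hA0 : {a ∈ A | ∃ b ∈ B, dist a b = setDist A B}.Nonempty)
    (hTA0 : Set.MapsTo T {a ∈ A | ∃ b ∈ B, dist a b = setDist A B}
      {b ∈ B | ∃ a ∈ A, dist a b = setDist A B})
    (hcomplete : ∀ x : ℕ → X, (∀ n, x n ∈ A) →
      (∀ n, dist (x (n + 1)) (T (x n)) = setDist A B) → CauchySeq x →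
      ∃ l ∈ A, Tendsto x atTop (𝓝 l))
    (hclosed : ∀ x : ℕ → X,
      (∀ n, x n ∈ {a ∈ A | ∃ b ∈ B, dist a b = setDist A B}) →
      (∀ n, dist (x (n + 1)) (T (x n)) = setDist A B) →
      ∀ l ∈ A, Tendsto x atTop (𝓝 l) →
      l ∈ {a ∈ A | ∃ b ∈ B, dist a b = setDist A B}) :
    ∃ p ∈ A, dist p (T p) = setDist A B ∧
      (∀ q ∈ A, dist q (T q) = setDist A B → q = p) ∧
      (∀ x : ℕ → X, (∀ n, x n ∈ A) →
        x 0 ∈ {a ∈ A | ∃ b ∈ B, dist a b = setDist A B} →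
        (∀ n, dist (x (n + 1)) (T (x n)) = setDist A B) →
        Tendsto x atTop (𝓝 p)) := by
  have hT : IsProximalContraction A T (setDist A B) k := hcontr
  obtain ⟨x₀, hx₀⟩ := hA0
  obtain ⟨x, hxA₀, hx⟩ := exists_isProximalSeq_of_mapsTo hTA0 hx₀
  have hxA : ∀ n, x n ∈ A := fun n ↦ (hxA₀ n).1
  obtain ⟨p, hp, hlim⟩ := hcomplete x hxA hx (hT.cauchySeq hk0 hk1 hxA hx)
  obtain ⟨-, z, hz, hzp⟩ := hTA0 (hclosed x hxA₀ hx p hp hlim)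
  have hpp : dist p (T p) = setDist A B := hT.eq_of_tendsto hxA hx hp hz hzp hlim ▸ hzp
  exact ⟨p, hp, hpp, fun q hq hqq ↦ hT.eq_of_dist_eq hk1 hp hq hpp hqq,
    fun y hyA _ hy ↦ hT.tendsto_of_dist_eq hk0 hk1 hyA hy hp hpp⟩

theorem statement11 {X : Type*} [MetricSpace X] (A B : Set X)
    (hA : A.Nonempty) (hB : B.Nonempty) (T : X → X) (hT : Set.MapsTo T A B)
    (k : ℝ) (hk0 : 0 ≤ k) (hk1 : k < 1)
    (hcontr : ∀ x ∈ A, ∀ y ∈ A, ∀ u ∈ A, ∀ v ∈ A,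
      dist u (T x) = setDist A B → dist v (T y) = setDist A B →
      dist u v ≤ k * dist x y)
    (hA0 : {a ∈ A | ∃ b ∈ B, dist a b = setDist A B}.Nonempty)
    (hTA0 : Set.MapsTo T {a ∈ A | ∃ b ∈ B, dist a b = setDist A B}
      {b ∈ B | ∃ a ∈ A, dist a b = setDist A B})
    (hcomplete : ∀ x : ℕ → X, (∀ n, x n ∈ A) →
      (∀ n, dist (x (n + 1)) (T (x n)) = setDist A B) → CauchySeq x →
      ∃ l ∈ A, Tendsto x atTop (𝓝 l))
    (hclosed : ∀ x : ℕ → X,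
      (∀ n, x n ∈ {a ∈ A | ∃ b ∈ B, dist a b = setDist A B}) →
      (∀ n, dist (x (n + 1)) (T (x n)) = setDist A B) →
      ∀ l ∈ A, Tendsto x atTop (𝓝 l) →
      l ∈ {a ∈ A | ∃ b ∈ B, dist a b = setDist A B}) :
    ∃ p ∈ A, dist p (T p) = setDist A B ∧
      (∀ q ∈ A, dist q (T q) = setDist A B → q = p) ∧
      (∀ x : ℕ → X, (∀ n, x n ∈ A) →
        x 0 ∈ {a ∈ A | ∃ b ∈ B, dist a b = setDist A B} →
        (∀ n, dist (x (n + 1)) (T (x n)) = setDist A B) →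
        Tendsto x atTop (𝓝 p)) :=
  statement11_general A B T k hk0 hk1 hcontr hA0 hTA0 hcomplete hclosed
end
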